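/- arXiv:2001.04856 — 2 statements merged into one kernel-verified Lean document; each statement's English description precedes it below -/
import Mathlib

section
/- In a modular lattice of finite height, the distance d(x,y) between x and y in the (undirected) cover graph equals h(x∨y) − h(x∧y), and equals 2h(x∨y) − h(x) − h(y), and equals h(x) + h(y) − 2h(x∧y). -/
/-- The cover graph of a lattice: vertices are lattice elements, with an edge
between `u` and `v` when one covers the other. -/
def coverGraph (α : Type*) [Lattice α] : SimpleGraph α where
  Adj u v := u ⋖ v ∨ v ⋖ u
  symm := ⟨fun _ _ h => h.elim Or.inr Or.inl⟩
  loopless := ⟨fun _ h => h.elim (fun h' => h'.ne rfl) (fun h' => h'.ne rfl)⟩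

/-!
Heights grade a modular lattice of finite height: if `a ⋖ b` and `c < b` is not below `a`, then
`a ⊔ c = b`, so `a ⊓ c ⋖ c` by modularity, and induction on the height gives
`h c = h (a ⊓ c) + 1 ≤ h a`.

Chains of covers through `x ⊓ y` and through `x ⊔ y` give the upper bounds
`d(x, y) ≤ h x + h y - 2 h(x ⊓ y)` and `d(x, y) ≤ 2 h(x ⊔ y) - h x - h y`, whose sum is
`2 (h(x ⊔ y) - h(x ⊓ y))`. Conversely, joining and meeting with `x` preserve `⩿` in a modular
lattice, so the potential `z ↦ h(x ⊔ z) - h(x ⊓ z)` changes by at most one along an edge of the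
cover graph; it vanishes at `x`, whence `h(x ⊔ y) - h(x ⊓ y) ≤ d(x, y)`, and all three bounds are
equalities.
-/

open Order

theorem SimpleGraph.Walk.le_add_length {V : Type*} {G : SimpleGraph V} {f : V → ℤ}
    (hf : ∀ ⦃u w⦄, G.Adj u w → f w ≤ f u + 1) {u v : V} (p : G.Walk u v) :
    f v ≤ f u + p.length := by
  induction p with
  | nil => simp
  | cons huw _ ih =>
    rw [SimpleGraph.Walk.length_cons]
    have := hf huw
    push_cast
    linarith

theorem SimpleGraph.Reachable.le_add_dist {V : Type*} {G : SimpleGraph V} {f : V → ℤ}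
    (hf : ∀ ⦃u w⦄, G.Adj u w → f w ≤ f u + 1) {u v : V} (h : G.Reachable u v) :
    f v ≤ f u + G.dist u v := by
  obtain ⟨p, hp⟩ := h.exists_walk_length_eq_dist
  exact hp ▸ p.le_add_length hf

theorem WCovBy.grade_le_add_one {α : Type*} [PartialOrder α] [GradeOrder ℕ α] {a b : α}
    (h : a ⩿ b) : grade ℕ b ≤ grade ℕ a + 1 := by
  rcases h.covBy_or_eq with h | rfl
  · exact (Nat.covBy_iff_add_one_eq.1 (h.grade ℕ)).ge
  · exact Nat.le_succ _

section ModularLattice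

variable {α : Type*} [Lattice α] [IsModularLattice α] {a b : α}

theorem WCovBy.sup_left (h : a ⩿ b) (c : α) : c ⊔ a ⩿ c ⊔ b := by
  refine ⟨sup_le_sup_left h.le c, fun z haz hzb => ?_⟩
  rcases h.eq_or_eq (le_inf h.le (le_sup_right.trans haz.le)) inf_le_left with hbz | hbz
  · -- modularity: `z = (c ⊔ b) ⊓ z = c ⊔ b ⊓ z = c ⊔ a`
    have := sup_inf_assoc_of_le b (le_sup_left.trans haz.le)
    rw [inf_eq_right.2 hzb.le, hbz] at this
    exact haz.ne this.symm
  · exact hzb.not_ge (sup_le (le_sup_left.trans haz.le) (hbz ▸ inf_le_right))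

theorem WCovBy.inf_left (h : a ⩿ b) (c : α) : c ⊓ a ⩿ c ⊓ b :=
  (h.toDual.sup_left (OrderDual.toDual c)).ofDual

theorem CovBy.height_eq_add_one (hab : a ⋖ b) (hb : height b ≠ ⊤) :
    height b = height a + 1 := by
  obtain ⟨n, hn⟩ := ENat.ne_top_iff_exists.1 hb
  induction n using Nat.strong_induction_on generalizing a b with
  | _ n ih =>
  refine le_antisymm ?_ (height_add_one_le hab.lt)
  rw [height_eq_iSup_lt_height b]
  refine iSup₂_le fun c hcb => add_le_add_left ?_ 1
  by_cases hca : c ≤ a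
  · exact height_mono hca
  have hsup : a ⊔ c = b := (hab.eq_or_eq le_sup_left (sup_le hab.le hcb.le)).resolve_left
    fun h => hca (h ▸ le_sup_right)
  have hcov : a ⊓ c ⋖ c := inf_covBy_of_covBy_sup_left (hsup ▸ hab)
  have hlt : a ⊓ c < a := inf_lt_left.2 fun hac =>
    (hab.eq_or_eq hac hcb.le).elim (fun h => hca h.le) hcb.ne
  have hc : height c < height b := height_strictMono hcb ((height_mono hcb.le).trans_lt hb.lt_top)
  have hc_ne_top : height c ≠ ⊤ := (hc.trans hb.lt_top).ne
  obtain ⟨m, hm⟩ := ENat.ne_top_iff_exists.1 hc_ne_top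
  rw [ih m (by rw [← hn, ← hm] at hc; exact_mod_cast hc) hcov hc_ne_top hm]
  exact height_add_one_le hlt

noncomputable abbrev IsModularLattice.gradeOrderHeight (hfin : ∀ a : α, height a ≠ ⊤) :
    GradeOrder ℕ α where
  grade a := (height a).toNat
  grade_strictMono a b hab := by
    rw [← ENat.natCast_lt_natCast, ENat.natCast_toNat (hfin a), ENat.natCast_toNat (hfin b)]
    exact height_strictMono hab (hfin a).lt_top
  covBy_grade a b hab := by
    rw [Nat.covBy_iff_add_one_eq, hab.height_eq_add_one (hfin b),
      ENat.toNat_add (hfin a) ENat.one_ne_top, ENat.toNat_one]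

end ModularLattice

section Graded

variable {α : Type*} [Lattice α] {a b : α}

theorem CovBy.coverGraph_adj (h : a ⋖ b) : (coverGraph α).Adj a b :=
  Or.inl h

variable [GradeOrder ℕ α]

theorem exists_coverGraph_walk_of_le (hab : a ≤ b) :
    ∃ p : (coverGraph α).Walk a b, p.length + grade ℕ a = grade ℕ b := by
  obtain ⟨n, hn⟩ := Nat.exists_eq_add_of_le (grade_mono (𝕆 := ℕ) hab)
  induction n generalizing a with
  | zero =>
    obtain rfl : a = b := hab.eq_of_not_lt fun h => (grade_strictMono (𝕆 := ℕ) h).ne (by omega)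
    exact ⟨.nil, by simp⟩
  | succ n ih =>
    -- `ℕ`-graded orders are well-founded, hence strongly atomic
    obtain ⟨z, haz, hzb⟩ := exists_covBy_le_of_lt (hab.lt_of_ne (by rintro rfl; omega))
    have hz := Nat.covBy_iff_add_one_eq.1 (haz.grade ℕ)
    obtain ⟨p, hp⟩ := ih hzb (by omega)
    exact ⟨.cons haz.coverGraph_adj p, by simp only [SimpleGraph.Walk.length_cons]; omega⟩

variable [IsModularLattice α]

theorem grade_sup_sub_grade_inf_le_of_coverGraph_adj (x : α) ⦃u w : α⦄
    (huw : (coverGraph α).Adj u w) :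
    (grade ℕ (x ⊔ w) : ℤ) - grade ℕ (x ⊓ w) ≤ (grade ℕ (x ⊔ u) : ℤ) - grade ℕ (x ⊓ u) + 1 := by
  rcases huw with huw | hwu
  · have h₁ := (huw.wcovBy.sup_left x).grade_le_add_one
    have h₂ := grade_mono (𝕆 := ℕ) (inf_le_inf_left x huw.le)
    omega
  · have h₁ := grade_mono (𝕆 := ℕ) (sup_le_sup_left hwu.le x)
    have h₂ := (hwu.wcovBy.inf_left x).grade_le_add_one
    omega

theorem coverGraph_dist_eq_grade_formulas (x y : α) :
    (coverGraph α).dist x y + grade ℕ (x ⊓ y) = grade ℕ (x ⊔ y) ∧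
    (coverGraph α).dist x y + grade ℕ x + grade ℕ y = 2 * grade ℕ (x ⊔ y) ∧
    (coverGraph α).dist x y + 2 * grade ℕ (x ⊓ y) = grade ℕ x + grade ℕ y := by
  obtain ⟨p₁, hp₁⟩ := exists_coverGraph_walk_of_le (inf_le_left : x ⊓ y ≤ x)
  obtain ⟨p₂, hp₂⟩ := exists_coverGraph_walk_of_le (inf_le_right : x ⊓ y ≤ y)
  obtain ⟨q₁, hq₁⟩ := exists_coverGraph_walk_of_le (le_sup_left : x ≤ x ⊔ y)
  obtain ⟨q₂, hq₂⟩ := exists_coverGraph_walk_of_le (le_sup_right : y ≤ x ⊔ y)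
  have h_below := (coverGraph α).dist_le (p₁.reverse.append p₂)
  have h_above := (coverGraph α).dist_le (q₁.append q₂.reverse)
  have h_lower := SimpleGraph.Reachable.le_add_dist
    (f := fun z => (grade ℕ (x ⊔ z) : ℤ) - grade ℕ (x ⊓ z))
    (grade_sup_sub_grade_inf_le_of_coverGraph_adj x) ⟨q₁.append q₂.reverse⟩
  simp only [SimpleGraph.Walk.length_append, SimpleGraph.Walk.length_reverse] at h_below h_above
  simp only [sup_idem, inf_idem, sub_self, zero_add] at h_lower
  omega

end Graded

/-- In a modular lattice of finite height, the cover-graph distance `d(x,y)` equals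
`h(x ⊔ y) − h(x ⊓ y) = 2·h(x ⊔ y) − h x − h y = h x + h y − 2·h(x ⊓ y)`
(expressed additively since all heights are finite). -/
theorem dist_eq_height_formulas {α : Type*} [Lattice α] [BoundedOrder α]
    [IsModularLattice α] (hfin : Order.height (⊤ : α) ≠ ⊤) (x y : α) :
    ((coverGraph α).dist x y : ℕ∞) + Order.height (x ⊓ y) = Order.height (x ⊔ y) ∧
    ((coverGraph α).dist x y : ℕ∞) + Order.height x + Order.height y =
      2 * Order.height (x ⊔ y) ∧
    ((coverGraph α).dist x y : ℕ∞) + 2 * Order.height (x ⊓ y) =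
      Order.height x + Order.height y := by
  have hheight_ne_top (a : α) : height a ≠ ⊤ := ne_top_of_le_ne_top hfin (height_mono le_top)
  let _ : GradeOrder ℕ α := IsModularLattice.gradeOrderHeight hheight_ne_top
  have hgrade (a : α) : height a = grade ℕ a := (ENat.natCast_toNat (hheight_ne_top a)).symm
  obtain ⟨h₁, h₂, h₃⟩ := coverGraph_dist_eq_grade_formulas x y
  simp only [hgrade]
  exact ⟨by exact_mod_cast h₁, by exact_mod_cast h₂, by exact_mod_cast h₃⟩
end

section
/- Let L be a finite modular lattice. A subset S of the cover arcs of L is diamond-closed if and only if each connected arc-component of S equals the set of cover arcs of L induced on some cover-preserving sublattice of L. Equivalently, S is diamond-closed iff S is the union of the induced cover-arc sets of a family of pairwise disjoint cover-preserving sublattices. -/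
def IsDiamond {α : Type*} [PartialOrder α] (a b c d : α) : Prop :=
  b ≠ c ∧ b ⋖ a ∧ c ⋖ a ∧ d ⋖ b ∧ d ⋖ c

def DiamondClosed {α : Type*} [PartialOrder α] (S : Set (α × α)) : Prop :=
  ∀ a b c d : α, IsDiamond a b c d →
    (((a, b) ∈ S ∧ (a, c) ∈ S) ∨ ((b, d) ∈ S ∧ (c, d) ∈ S)) →
    ((a, b) ∈ S ∧ (a, c) ∈ S ∧ (b, d) ∈ S ∧ (c, d) ∈ S)

def IsPathIn {α : Type*} (S : Set (α × α)) (x y : α) (l : List α) : Prop :=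
  l.head? = some x ∧ l.getLast? = some y ∧
    l.Chain' (fun u v => (u, v) ∈ S ∨ (v, u) ∈ S)

def ArcVertex {α : Type*} (S : Set (α × α)) (x : α) : Prop :=
  ∃ p ∈ S, p.1 = x ∨ p.2 = x

def ArcConnected {α : Type*} (S : Set (α × α)) : Prop :=
  ∀ x y, ArcVertex S x → ArcVertex S y → ∃ l, IsPathIn S x y l

def IsArcComponent {α : Type*} (S T : Set (α × α)) : Prop :=
  T ⊆ S ∧ T.Nonempty ∧ ArcConnected T ∧
    ∀ T' : Set (α × α), T ⊆ T' → T' ⊆ S → ArcConnected T' → T' = T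

def inducedArcs {α : Type*} [PartialOrder α] (K : Set α) : Set (α × α) :=
  {p | p.2 ⋖ p.1 ∧ p.1 ∈ K ∧ p.2 ∈ K}

def CoverPres {α : Type*} [Lattice α] (K : Sublattice α) : Prop :=
  ∀ a b : K, a ⋖ b → (a : α) ⋖ (b : α)

/-!
Let `T` be an arc-component of a diamond-closed set `S` of cover arcs. Two arcs of `T` leaving
(or entering) a common vertex span, by modularity, a diamond of covers; its other two arcs lie in
`S` by diamond-closure and then in `T`, since they share a vertex with it. So the arc relation of
`T` has the diamond property both downwards and upwards, and the Church–Rosser argument, run while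
keeping track of meets, turns a walk between two vertices `x, y` of `T` into a descending chain of
arcs from `x` to `x ⊓ y`; dually there is one from `x ⊔ y` down to `x`. Hence the vertices of `T`
form a sublattice, and since a descending chain of covers from `b` to a cover `a ⋖ b` is a single
arc, `T` consists of all covers between its vertices and the sublattice preserves covers.
Conversely, a diamond whose out-V or in-V lies in a sublattice lies there entirely, as its fourth
vertex is the meet or the join of the middle two.
-/

open Relation

section

variable {α : Type*}

structure DiamondComplete [Lattice α] (r : α → α → Prop) : Prop where
  covBy : ∀ ⦃a b⦄, r a b → b ⋖ a
  rel_inf : ∀ ⦃a b c⦄, r a b → r a c → b ≠ c → r b (b ⊓ c)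
  sup_rel : ∀ ⦃a b c⦄, r b a → r c a → b ≠ c → r (b ⊔ c) b

namespace DiamondComplete

variable [Lattice α] {r : α → α → Prop} (hr : DiamondComplete r)
include hr

theorem dual : DiamondComplete (α := αᵒᵈ) (flip r) where
  covBy _ _ h := (hr.covBy h).toDual
  rel_inf _ _ _ hb hc hbc := hr.sup_rel hb hc hbc
  sup_rel _ _ _ hb hc hbc := hr.rel_inf hb hc hbc

theorem le_of_reflTransGen {a b : α} (h : ReflTransGen r a b) : b ≤ a := by
  induction h with
  | refl => rfl
  | tail _ hcb ih => exact (hr.covBy hcb).le.trans ih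

theorem exists_common_ancestor {x y : α} (h : ReflTransGen (SymmGen r) x y) :
    ∃ m, ReflTransGen r m x ∧ ReflTransGen r m y := by
  have hjoin : Equivalence (Join (ReflTransGen (flip r))) := by
    refine equivalence_join_reflTransGen fun a b c hb hc => ?_
    rcases eq_or_ne b c with rfl | hbc
    · exact ⟨b, .refl, .refl⟩
    · refine ⟨b ⊔ c, .single (hr.sup_rel hb hc hbc), .single ?_⟩
      rw [sup_comm]
      exact hr.sup_rel hc hb hbc.symm
  have : Join (ReflTransGen (flip r)) x y := by
    induction h with
    | refl => exact hjoin.refl x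
    | tail _ hs ih =>
      refine hjoin.trans ih ?_
      rcases hs with h | h
      · exact ⟨_, .refl, .single h⟩
      · exact ⟨_, .single h, .refl⟩
  obtain ⟨m, hxm, hym⟩ := this
  exact ⟨m, reflTransGen_swap.1 hxm, reflTransGen_swap.1 hym⟩

/-- The strip lemma of the Church–Rosser argument, with the meet as the common descendant. -/
theorem reflTransGen_inf_of_rel {a b y : α} (hby : ReflTransGen r b y) (hba : r b a) :
    ReflTransGen r a (a ⊓ y) ∧ ReflGen r y (a ⊓ y) := by
  induction hby with
  | refl =>
    rw [inf_eq_left.2 (hr.covBy hba).le]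
    exact ⟨.refl, .single hba⟩
  | @tail w w' _ hww' ih =>
    obtain ⟨ha, hw⟩ := ih
    have hw'w : w' ≤ w := (hr.covBy hww').le
    rw [show a ⊓ w' = a ⊓ w ⊓ w' by rw [inf_assoc, inf_eq_right.2 hw'w]]
    rcases (reflGen_iff _ _ _).1 hw with heq | hw
    · rw [heq, inf_eq_right.2 hw'w]
      exact ⟨(heq ▸ ha).tail hww', .refl⟩
    rcases eq_or_ne (a ⊓ w) w' with heq | hne
    · rw [heq, inf_idem]
      exact ⟨heq ▸ ha, .refl⟩
    refine ⟨ha.tail (hr.rel_inf hw hww' hne), .single ?_⟩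
    rw [inf_comm]
    exact hr.rel_inf hww' hw hne.symm

theorem reflTransGen_inf_of_reflTransGen {m x y : α} (hmx : ReflTransGen r m x)
    (hmy : ReflTransGen r m y) : ReflTransGen r x (x ⊓ y) := by
  induction hmx using ReflTransGen.head_induction_on generalizing y with
  | refl => rwa [inf_eq_right.2 (hr.le_of_reflTransGen hmy)]
  | head hma hax ih =>
    have := ih (hr.reflTransGen_inf_of_rel hmy hma).1
    rwa [← inf_assoc, inf_eq_left.2 (hr.le_of_reflTransGen hax)] at this

theorem reflTransGen_inf {x y : α} (h : ReflTransGen (SymmGen r) x y) :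
    ReflTransGen r x (x ⊓ y) :=
  let ⟨_, hmx, hmy⟩ := hr.exists_common_ancestor h
  hr.reflTransGen_inf_of_reflTransGen hmx hmy

theorem reflTransGen_sup {x y : α} (h : ReflTransGen (SymmGen r) x y) :
    ReflTransGen r (x ⊔ y) x :=
  reflTransGen_swap.1 <| hr.dual.reflTransGen_inf (α := αᵒᵈ) <|
    ReflTransGen.mono (fun _ _ => Or.symm) _ _ h

theorem exists_rel_of_reflTransGen {a b : α} (h : ReflTransGen r b a) (hab : a < b) :
    ∃ c, r b c ∧ a ≤ c := by
  obtain hba | ⟨c, hbc, hca⟩ := h.cases_head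
  · exact absurd hba hab.ne'
  · exact ⟨c, hbc, hr.le_of_reflTransGen hca⟩

theorem rel_of_reflTransGen_of_covBy {a b : α} (h : ReflTransGen r b a) (hab : a ⋖ b) :
    r b a := by
  obtain ⟨c, hbc, hac⟩ := hr.exists_rel_of_reflTransGen h hab.lt
  obtain rfl := hac.eq_of_not_lt fun hac' => hab.2 hac' (hr.covBy hbc).lt
  exact hbc

end DiamondComplete

def arcRel (T : Set (α × α)) (u v : α) : Prop := (u, v) ∈ T

section Arcs

variable {S T T' : Set (α × α)} {x y : α}

theorem exists_isPathIn_iff :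
    (∃ l, IsPathIn T x y l) ↔ ReflTransGen (SymmGen (arcRel T)) x y := by
  constructor
  · rintro ⟨_ | ⟨a, l⟩, hx, hy, hl⟩
    · simp at hx
    · obtain rfl : a = x := Option.some_injective _ hx
      exact List.relationReflTransGen_of_exists_isChain_cons l hl
        (Option.some_injective _ ((List.getLast?_eq_some_getLast _).symm.trans hy))
  · intro h
    obtain ⟨l, hl, hy⟩ := List.exists_isChain_cons_of_relationReflTransGen h
    exact ⟨x :: l, rfl, by rw [List.getLast?_eq_some_getLast (List.cons_ne_nil _ _), hy], hl⟩

theorem arcConnected_iff : ArcConnected T ↔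
    ∀ x y, ArcVertex T x → ArcVertex T y → ReflTransGen (SymmGen (arcRel T)) x y := by
  simp only [ArcConnected, exists_isPathIn_iff]

theorem arcVertex_iff_of_reflTransGen (h : ReflTransGen (arcRel T) x y) :
    ArcVertex T x ↔ ArcVertex T y := by
  rcases eq_or_ne x y with rfl | hne
  · rfl
  obtain ⟨_, hx, -⟩ := h.cases_head.resolve_left hne
  obtain ⟨_, -, hy⟩ := h.cases_tail.resolve_left hne.symm
  exact iff_of_true ⟨_, hx, Or.inl rfl⟩ ⟨_, hy, Or.inr rfl⟩

theorem arcConnected_singleton (e : α × α) : ArcConnected {e} := by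
  have he : SymmGen (arcRel {e}) e.1 e.2 := .of_rel rfl
  rw [arcConnected_iff]
  rintro x y ⟨_, rfl, rfl | rfl⟩ ⟨_, rfl, rfl | rfl⟩
  exacts [.refl, .single he, .single he.symm, .refl]

theorem ArcConnected.union (hT : ArcConnected T) (hT' : ArcConnected T')
    (hx : ArcVertex T x) (hx' : ArcVertex T' x) : ArcConnected (T ∪ T') := by
  rw [arcConnected_iff] at *
  have hsub {U : Set (α × α)} (hU : U ⊆ T ∪ T') {a b : α} :
      ReflTransGen (SymmGen (arcRel U)) a b → ReflTransGen (SymmGen (arcRel (T ∪ T'))) a b :=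
    ReflTransGen.mono (fun _ _ => Or.imp (@hU _) (@hU _)) _ _
  have hto : ∀ z, ArcVertex (T ∪ T') z → ReflTransGen (SymmGen (arcRel (T ∪ T'))) z x := by
    rintro z ⟨p, hp | hp, hz⟩
    · exact hsub Set.subset_union_left (hT z x ⟨p, hp, hz⟩ hx)
    · exact hsub Set.subset_union_right (hT' z x ⟨p, hp, hz⟩ hx')
  exact fun y z hy hz => (hto y hy).trans (symm (hto z hz))

theorem IsArcComponent.eq_of_arcVertex (hT : IsArcComponent S T) (hT' : IsArcComponent S T')
    (hx : ArcVertex T x) (hx' : ArcVertex T' x) : T = T' := by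
  have hU := hT.2.2.1.union hT'.2.2.1 hx hx'
  have hUS := Set.union_subset hT.1 hT'.1
  exact (hT.2.2.2 _ Set.subset_union_left hUS hU).symm.trans
    (hT'.2.2.2 _ Set.subset_union_right hUS hU)

theorem IsArcComponent.mem_of_arcVertex (hT : IsArcComponent S T) {e : α × α} (he : e ∈ S)
    (hv : ArcVertex T e.1 ∨ ArcVertex T e.2) : e ∈ T := by
  obtain ⟨v, hvT, hve⟩ : ∃ v, ArcVertex T v ∧ ArcVertex {e} v :=
    hv.elim (⟨_, ·, e, rfl, Or.inl rfl⟩) (⟨_, ·, e, rfl, Or.inr rfl⟩)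
  have := hT.2.2.2 _ Set.subset_union_left (Set.union_subset hT.1 (Set.singleton_subset_iff.2 he))
    (hT.2.2.1.union (arcConnected_singleton e) hvT hve)
  exact this ▸ Set.mem_union_right T rfl

theorem exists_isArcComponent [Finite α] {e : α × α} (he : e ∈ S) :
    ∃ T, IsArcComponent S T ∧ e ∈ T := by
  obtain ⟨T, ⟨heT, hTS, hT⟩, hmax⟩ := Set.Finite.exists_maximalFor id
    {T | e ∈ T ∧ T ⊆ S ∧ ArcConnected T} (Set.toFinite _)
    ⟨{e}, rfl, Set.singleton_subset_iff.2 he, arcConnected_singleton e⟩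
  exact ⟨T, ⟨hTS, ⟨e, heT⟩, hT, fun T' hTT' hT'S hT' =>
    (hmax ⟨hTT' heT, hT'S, hT'⟩ hTT').antisymm hTT'⟩, heT⟩

end Arcs

section Diamonds

variable [Lattice α] {a b c d : α}

theorem IsDiamond.sup_eq (h : IsDiamond a b c d) : b ⊔ c = a :=
  h.2.1.wcovBy.sup_eq h.2.2.1.wcovBy h.1

theorem IsDiamond.inf_eq (h : IsDiamond a b c d) : b ⊓ c = d :=
  h.2.2.2.1.wcovBy.inf_eq h.2.2.2.2.wcovBy h.1

theorem isDiamond_inf [IsWeakLowerModularLattice α] (hbc : b ≠ c) (hb : b ⋖ a) (hc : c ⋖ a) :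
    IsDiamond a b c (b ⊓ c) := by
  have hs : b ⊔ c = a := hb.wcovBy.sup_eq hc.wcovBy hbc
  refine ⟨hbc, hb, hc, inf_covBy_of_covBy_sup_of_covBy_sup_left ?_ ?_,
    inf_covBy_of_covBy_sup_of_covBy_sup_right ?_ ?_⟩ <;> rwa [hs]

theorem isDiamond_sup [IsWeakUpperModularLattice α] (hbc : b ≠ c) (hb : d ⋖ b) (hc : d ⋖ c) :
    IsDiamond (b ⊔ c) b c d := by
  have hs : b ⊓ c = d := hb.wcovBy.inf_eq hc.wcovBy hbc
  refine ⟨hbc, covBy_sup_of_inf_covBy_of_inf_covBy_left ?_ ?_,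
    covBy_sup_of_inf_covBy_of_inf_covBy_right ?_ ?_, hb, hc⟩ <;> rwa [hs]

theorem diamondClosed_of_forall_exists_sublattice {S : Set (α × α)}
    (h : ∀ p ∈ S, ∀ q ∈ S, p.1 = q.1 ∨ p.2 = q.2 →
      ∃ K : Sublattice α, inducedArcs (K : Set α) ⊆ S ∧ p ∈ inducedArcs K ∧ q ∈ inducedArcs K) :
    DiamondClosed S := by
  rintro a b c d hd (⟨hab, hac⟩ | ⟨hbd, hcd⟩)
  · obtain ⟨K, hKS, ⟨-, -, hbK⟩, ⟨-, -, hcK⟩⟩ := h _ hab _ hac (.inl rfl)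
    have hdK : d ∈ K := hd.inf_eq ▸ K.inf_mem hbK hcK
    exact ⟨hab, hac, hKS ⟨hd.2.2.2.1, hbK, hdK⟩, hKS ⟨hd.2.2.2.2, hcK, hdK⟩⟩
  · obtain ⟨K, hKS, ⟨-, hbK, -⟩, ⟨-, hcK, -⟩⟩ := h _ hbd _ hcd (.inr rfl)
    have haK : a ∈ K := hd.sup_eq ▸ K.sup_mem hbK hcK
    exact ⟨hKS ⟨hd.2.1, haK, hbK⟩, hKS ⟨hd.2.2.1, haK, hcK⟩, hbd, hcd⟩

theorem diamondClosed_biUnion_inducedArcs {𝒦 : Set (Sublattice α)}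
    (h𝒦 : 𝒦.Pairwise fun K K' => Disjoint (K : Set α) (K' : Set α)) :
    DiamondClosed (⋃ K ∈ 𝒦, inducedArcs (K : Set α)) := by
  refine diamondClosed_of_forall_exists_sublattice fun p hp q hq hpq => ?_
  simp only [Set.mem_iUnion] at hp hq
  obtain ⟨K, hK, hpK⟩ := hp
  obtain ⟨K', hK', hqK'⟩ := hq
  obtain rfl : K = K' := h𝒦.eq hK hK' <| Set.not_disjoint_iff.2 <|
    hpq.elim (fun h => ⟨_, hpK.2.1, h ▸ hqK'.2.1⟩) (fun h => ⟨_, hpK.2.2, h ▸ hqK'.2.2⟩)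
  exact ⟨K, fun _ hp => Set.mem_biUnion hK hp, hpK, hqK'⟩

end Diamonds

section Components

variable [Lattice α] {S T : Set (α × α)}

theorem IsArcComponent.diamondComplete [IsWeakLowerModularLattice α]
    [IsWeakUpperModularLattice α] (hSc : ∀ p ∈ S, p.2 ⋖ p.1) (hS : DiamondClosed S)
    (hT : IsArcComponent S T) : DiamondComplete (arcRel T) where
  covBy _ _ h := hSc _ (hT.1 h)
  rel_inf _ _ _ hb hc hbc :=
    have hd := isDiamond_inf hbc (hSc _ (hT.1 hb)) (hSc _ (hT.1 hc))
    hT.mem_of_arcVertex (hS _ _ _ _ hd (.inl ⟨hT.1 hb, hT.1 hc⟩)).2.2.1 (.inl ⟨_, hb, .inr rfl⟩)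
  sup_rel _ _ _ hb hc hbc :=
    have hd := isDiamond_sup hbc (hSc _ (hT.1 hb)) (hSc _ (hT.1 hc))
    hT.mem_of_arcVertex (hS _ _ _ _ hd (.inr ⟨hT.1 hb, hT.1 hc⟩)).1 (.inr ⟨_, hb, .inl rfl⟩)

namespace ArcConnected

variable (hT : ArcConnected T) (hr : DiamondComplete (arcRel T))
include hT hr

theorem infClosed : InfClosed {x | ArcVertex T x} := fun x hx y hy =>
  (arcVertex_iff_of_reflTransGen (hr.reflTransGen_inf (arcConnected_iff.1 hT x y hx hy))).1 hx

theorem supClosed : SupClosed {x | ArcVertex T x} := fun x hx y hy =>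
  (arcVertex_iff_of_reflTransGen (hr.reflTransGen_sup (arcConnected_iff.1 hT x y hx hy))).2 hx

theorem eq_inducedArcs : T = inducedArcs {x | ArcVertex T x} := by
  ext ⟨a, b⟩
  refine ⟨fun h => ⟨hr.covBy h, ⟨_, h, .inl rfl⟩, ⟨_, h, .inr rfl⟩⟩, ?_⟩
  rintro ⟨hba, ha, hb⟩
  have hab := hr.reflTransGen_inf (arcConnected_iff.1 hT a b ha hb)
  rw [inf_eq_right.2 hba.le] at hab
  exact hr.rel_of_reflTransGen_of_covBy hab hba

theorem coverPres {K : Sublattice α} (hK : (K : Set α) = {x | ArcVertex T x}) : CoverPres K := by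
  have hK (z : α) : z ∈ K ↔ ArcVertex T z := Set.ext_iff.1 hK z
  intro a b hab
  have hba := hr.reflTransGen_inf (arcConnected_iff.1 hT b a ((hK b).1 b.2) ((hK a).1 a.2))
  rw [inf_eq_right.2 (show (a : α) ≤ b from hab.le)] at hba
  obtain ⟨c, hbc, hac⟩ := hr.exists_rel_of_reflTransGen hba hab.lt
  have hcK : c ∈ K := (hK c).2 ⟨_, hbc, .inr rfl⟩
  obtain rfl : (a : α) = c := hac.eq_of_not_lt fun hac' =>
    hab.2 (show a < ⟨c, hcK⟩ from hac') (show ⟨c, hcK⟩ < b from (hr.covBy hbc).lt)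
  exact hr.covBy hbc

end ArcConnected

theorem IsArcComponent.exists_coverPres [IsWeakLowerModularLattice α]
    [IsWeakUpperModularLattice α] (hSc : ∀ p ∈ S, p.2 ⋖ p.1) (hS : DiamondClosed S)
    (hT : IsArcComponent S T) :
    ∃ K : Sublattice α, (K : Set α) = {x | ArcVertex T x} ∧ CoverPres K ∧
      T = inducedArcs (K : Set α) := by
  have hr := hT.diamondComplete hSc hS
  exact ⟨⟨_, hT.2.2.1.supClosed hr, hT.2.2.1.infClosed hr⟩, rfl, hT.2.2.1.coverPres hr rfl,
    hT.2.2.1.eq_inducedArcs hr⟩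

end Components

section Packing

variable [Lattice α] [Finite α] {S : Set (α × α)}

theorem diamondClosed_of_forall_isArcComponent
    (h : ∀ T, IsArcComponent S T → ∃ K : Sublattice α, T = inducedArcs (K : Set α)) :
    DiamondClosed S := by
  refine diamondClosed_of_forall_exists_sublattice fun p hp q hq hpq => ?_
  obtain ⟨T, hT, hpT⟩ := exists_isArcComponent hp
  have hqT : q ∈ T := hT.mem_of_arcVertex hq <|
    hpq.imp (fun h => ⟨p, hpT, .inl h⟩) (fun h => ⟨p, hpT, .inr h⟩)
  obtain ⟨K, rfl⟩ := h T hT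
  exact ⟨K, hT.1, hpT, hqT⟩

theorem DiamondClosed.exists_pairwise_disjoint_coverPres [IsWeakLowerModularLattice α]
    [IsWeakUpperModularLattice α] (hSc : ∀ p ∈ S, p.2 ⋖ p.1) (hS : DiamondClosed S) :
    ∃ 𝒦 : Set (Sublattice α), (∀ K ∈ 𝒦, CoverPres K) ∧
      (𝒦.Pairwise fun K K' => Disjoint (K : Set α) (K' : Set α)) ∧
      S = ⋃ K ∈ 𝒦, inducedArcs (K : Set α) := by
  refine ⟨{K | ∃ T, IsArcComponent S T ∧ (K : Set α) = {x | ArcVertex T x}}, ?_, ?_, ?_⟩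
  · rintro K ⟨T, hT, hK⟩
    exact hT.2.2.1.coverPres (hT.diamondComplete hSc hS) hK
  · rintro K ⟨T, hT, hK⟩ K' ⟨T', hT', hK'⟩ hne
    refine Set.disjoint_left.2 fun x hx hx' => hne (SetLike.coe_injective ?_)
    rw [hK] at hx
    rw [hK'] at hx'
    rw [hK, hK', hT.eq_of_arcVertex hT' hx hx']
  · ext p
    simp only [Set.mem_iUnion]
    constructor
    · intro hp
      obtain ⟨T, hT, hpT⟩ := exists_isArcComponent hp
      obtain ⟨K, hK, -, rfl⟩ := hT.exists_coverPres hSc hS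
      exact ⟨K, ⟨_, hT, hK⟩, hpT⟩
    · rintro ⟨K, ⟨T, hT, hK⟩, hp⟩
      rw [hK, ← hT.2.2.1.eq_inducedArcs (hT.diamondComplete hSc hS)] at hp
      exact hT.1 hp

end Packing

end

/-- In a finite modular lattice, a set `S` of cover arcs is diamond-closed iff each
arc-component of `S` is the set of cover arcs induced on some cover-preserving
sublattice; equivalently, iff `S` is the union of the induced arc sets of a family
of pairwise disjoint cover-preserving sublattices. -/
theorem diamondClosed_iff_CS_packing
    {α : Type*} [Lattice α] [Fintype α] [IsModularLattice α]
    (S : Set (α × α)) (hSc : ∀ p ∈ S, p.2 ⋖ p.1) :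
    (DiamondClosed S ↔
      ∀ T : Set (α × α), IsArcComponent S T →
        ∃ K : Sublattice α, CoverPres K ∧ T = inducedArcs (K : Set α)) ∧
    (DiamondClosed S ↔
      ∃ 𝒦 : Set (Sublattice α), (∀ K ∈ 𝒦, CoverPres K) ∧
        (𝒦.Pairwise fun K K' => Disjoint (K : Set α) (K' : Set α)) ∧
        S = ⋃ K ∈ 𝒦, inducedArcs (K : Set α)) := by
  refine ⟨⟨fun hS T hT => ?_, fun h => ?_⟩, ⟨fun hS => ?_, ?_⟩⟩
  · obtain ⟨K, -, hK, hTK⟩ := hT.exists_coverPres hSc hS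
    exact ⟨K, hK, hTK⟩
  · exact diamondClosed_of_forall_isArcComponent fun T hT => (h T hT).imp fun _ => And.right
  · exact hS.exists_pairwise_disjoint_coverPres hSc
  · rintro ⟨𝒦, -, h𝒦, rfl⟩
    exact diamondClosed_biUnion_inducedArcs h𝒦
end
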